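/- arXiv:2602.04663 — 5 statements merged into one kernel-verified Lean document; each statement's English description precedes it below -/
import Mathlib

section
/- Fix η > 0, b ∈ ℝ, and set A(x) = (η/β)(R(x) − b). Let ν be a probability measure with density q with respect to π_ref satisfying 0 < ε ≤ q ≤ C π_ref-a.e. Then for every probability measure π on X, F(π) = ∫ A dπ − KL(π‖ν) − η·KL(π‖π_ref) satisfies F(π) ≤ F(T(ν)), with equality if and only if π = T(ν); i.e., the proximal objective is uniquely maximized at the geometric mixture T(ν) with density dT(ν)/dπ_ref ∝ exp(ηR/((1+η)β))·q^{1/(1+η)}, and this maximizer is independent of the baseline b. -/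
open MeasureTheory

/-- Kullback–Leibler divergence `∫ log(dμ/dν) dμ`, equal to `+∞` if `μ` is not
absolutely continuous with respect to `ν` (or if the log-likelihood ratio is not integrable). -/
noncomputable def klDiv {X : Type*} [MeasurableSpace X] (μ ν : Measure X) : EReal :=
  open scoped Classical in
  if μ ≪ ν ∧ Integrable (llr μ ν) μ then ((∫ x, llr μ ν x ∂μ : ℝ) : EReal) else ⊤

/-!
Both `ν` and `T(ν)` are exponential tilts of `π_ref`: `ν` by `log q` and `T(ν)` by
`g = (A + log q) / (1 + η)`; the baseline `b` shifts `g` by a constant, which the normalisation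
of the tilt absorbs. The change-of-reference formula for `llr` against a tilted measure turns the
objective into `F(π) = c - (1 + η) KL(π ‖ T(ν))` whenever `KL(π ‖ π_ref)` is finite, and
`F(π) = ⊥` otherwise. Gibbs' inequality, with its equality case, concludes.
-/

section

open Real

variable {X : Type*} [MeasurableSpace X]

lemma klDiv_eq_integral_llr {μ ν : Measure X} (h : μ ≪ ν) (hint : Integrable (llr μ ν) μ) :
    klDiv μ ν = ((∫ x, llr μ ν x ∂μ : ℝ) : EReal) :=
  if_pos ⟨h, hint⟩

lemma klDiv_eq_top {μ ν : Measure X} (h : ¬(μ ≪ ν ∧ Integrable (llr μ ν) μ)) :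
    klDiv μ ν = ⊤ :=
  if_neg h

lemma integral_llr_nonneg {μ ν : Measure X} [IsProbabilityMeasure μ] [IsProbabilityMeasure ν]
    (h : μ ≪ ν) (hint : Integrable (llr μ ν) μ) : 0 ≤ ∫ x, llr μ ν x ∂μ := by
  simpa using InformationTheory.integral_llr_add_sub_measure_univ_nonneg h hint

lemma eq_of_integral_llr_eq_zero {μ ν : Measure X} [IsProbabilityMeasure μ]
    [IsProbabilityMeasure ν] (h : μ ≪ ν) (hint : Integrable (llr μ ν) μ)
    (h0 : ∫ x, llr μ ν x ∂μ = 0) : μ = ν :=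
  InformationTheory.klDiv_eq_zero_iff.mp <| by
    rw [InformationTheory.klDiv_of_ac_of_integrable h hint, h0]
    simp

lemma coe_sub_mul_integral_llr_le_and_eq_iff {ρ T : Measure X} [IsProbabilityMeasure ρ]
    [IsProbabilityMeasure T] {c κ : ℝ} (hκ : 0 < κ) (h : ρ ≪ T)
    (hint : Integrable (llr ρ T) ρ) :
    ((c - κ * ∫ x, llr ρ T x ∂ρ : ℝ) : EReal) ≤ ((c - κ * ∫ x, llr T T x ∂T : ℝ) : EReal) ∧
      (((c - κ * ∫ x, llr ρ T x ∂ρ : ℝ) : EReal) = ((c - κ * ∫ x, llr T T x ∂T : ℝ) : EReal)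
        ↔ ρ = T) := by
  have hTT : ∫ x, llr T T x ∂T = 0 := by simp [integral_congr_ae (llr_self T)]
  have hnonneg := integral_llr_nonneg h hint
  refine ⟨?_, fun heq => ?_, fun he => by subst he; rfl⟩
  · rw [hTT, EReal.coe_le_coe_iff]
    nlinarith
  · rw [hTT, EReal.coe_eq_coe_iff] at heq
    exact eq_of_integral_llr_eq_zero h hint (by nlinarith)

lemma MeasureTheory.Integrable.of_ae_abs_le_of_absolutelyContinuous {μ ρ : Measure X}
    [IsFiniteMeasure ρ] {f : X → ℝ} {B : ℝ} (hρ : ρ ≪ μ) (hf : AEStronglyMeasurable f ρ)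
    (hB : ∀ᵐ x ∂μ, |f x| ≤ B) : Integrable f ρ :=
  Integrable.of_bound hf B (hρ.ae_le hB)

lemma integrable_exp_of_ae_abs_le {μ : Measure X} [IsFiniteMeasure μ] {f : X → ℝ} {B : ℝ}
    (hf : AEMeasurable f μ) (hB : ∀ᵐ x ∂μ, |f x| ≤ B) : Integrable (fun x => exp (f x)) μ :=
  Integrable.of_bound (measurable_exp.comp_aemeasurable hf).aestronglyMeasurable (exp B)
    (hB.mono fun x hx => by
      rw [norm_of_nonneg (exp_pos _).le]
      exact exp_le_exp.mpr (le_of_abs_le hx))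

lemma tilted_add_const (μ : Measure X) (f : X → ℝ) (c : ℝ) :
    μ.tilted (fun x => f x + c) = μ.tilted f := by
  simp only [Measure.tilted, exp_add, integral_mul_const, mul_div_mul_right _ _ (exp_pos c).ne']

lemma tilted_log_eq_withDensity {μ : Measure X} {p : X → ℝ} (hp : ∀ᵐ x ∂μ, 0 < p x) :
    μ.tilted (fun x => log (p x))
      = μ.withDensity fun x => ENNReal.ofReal (p x / ∫ x, p x ∂μ) := by
  have hexp : (fun x => exp (log (p x))) =ᵐ[μ] p := hp.mono fun x hx => exp_log hx
  rw [Measure.tilted, integral_congr_ae hexp]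
  exact withDensity_congr_ae (hexp.mono fun x hx => by simp only [hx])

lemma eq_tilted_log_of_eq_withDensity {μ ν : Measure X} [IsProbabilityMeasure ν] {q : X → ℝ}
    (hν : ν = μ.withDensity fun x => ENNReal.ofReal (q x)) (hq : Integrable q μ)
    (hq_pos : ∀ᵐ x ∂μ, 0 < q x) : ν = μ.tilted fun x => log (q x) := by
  have hq_one : ∫ x, q x ∂μ = 1 := by
    have h := measure_univ (μ := ν)
    rw [hν, withDensity_apply _ .univ, Measure.restrict_univ,
      ← ofReal_integral_eq_lintegral_ofReal hq (hq_pos.mono fun x hx => hx.le)] at h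
    exact ENNReal.ofReal_eq_one.mp h
  simp_rw [tilted_log_eq_withDensity hq_pos, hq_one, div_one, hν]

lemma integrable_llr_tilted_self {μ : Measure X} [IsFiniteMeasure μ] {g : X → ℝ}
    (hg : Integrable g (μ.tilted g)) (hexp : Integrable (fun x => exp (g x)) μ) :
    Integrable (llr (μ.tilted g) μ) (μ.tilted g) := by
  have h : llr (μ.tilted g) μ =ᵐ[μ.tilted g] fun x => g x - log (∫ x, exp (g x) ∂μ) :=
    (tilted_absolutelyContinuous μ g).ae_le (log_rnDeriv_tilted_left_self hexp)
  exact (hg.sub (integrable_const _)).congr h.symm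

noncomputable def proximalObjective (μ ν : Measure X) (a : X → ℝ) (η : ℝ) (ρ : Measure X) :
    EReal :=
  ((∫ x, a x ∂ρ : ℝ) : EReal) - klDiv ρ ν - (η : EReal) * klDiv ρ μ

lemma proximalObjective_eq_bot {μ ν ρ : Measure X} {a : X → ℝ} {η : ℝ} (hη : 0 < η)
    (h : ¬(ρ ≪ μ ∧ Integrable (llr ρ μ) ρ)) : proximalObjective μ ν a η ρ = ⊥ := by
  rw [proximalObjective, klDiv_eq_top h, EReal.coe_mul_top_of_pos hη, EReal.sub_top]

lemma proximalObjective_tilted_eq {μ ρ : Measure X} [SigmaFinite μ] [IsProbabilityMeasure ρ]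
    {a f : X → ℝ} {η : ℝ} (hη : 1 + η ≠ 0) (hρ : ρ ≪ μ) (hllr : Integrable (llr ρ μ) ρ)
    (ha : Integrable a ρ) (hf : Integrable f ρ) (hexpf : Integrable (fun x => exp (f x)) μ)
    (hexpg : Integrable (fun x => exp ((a x + f x) / (1 + η))) μ) :
    proximalObjective μ (μ.tilted f) a η ρ
      = (((1 + η) * log (∫ x, exp ((a x + f x) / (1 + η)) ∂μ) - log (∫ x, exp (f x) ∂μ)
          - (1 + η) * ∫ x, llr ρ (μ.tilted fun x => (a x + f x) / (1 + η)) x ∂ρ : ℝ) : EReal) := by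
  have hg : Integrable (fun x => (a x + f x) / (1 + η)) ρ := (ha.add hf).div_const _
  rw [proximalObjective, klDiv_eq_integral_llr (hρ.trans (absolutelyContinuous_tilted hexpf))
      (integrable_llr_tilted_right hρ hf hllr hexpf), klDiv_eq_integral_llr hρ hllr,
    integral_llr_tilted_right hρ hf hexpf hllr, integral_llr_tilted_right hρ hg hexpg hllr,
    integral_div, integral_add ha hf, ← EReal.coe_mul, ← EReal.coe_sub, ← EReal.coe_sub,
    EReal.coe_eq_coe_iff]
  field_simp
  ring

theorem proximalObjective_le_and_eq_iff {μ ν T ρ : Measure X} [IsFiniteMeasure μ] [NeZero μ]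
    [IsProbabilityMeasure ρ] {a f : X → ℝ} {η A B : ℝ} (hη : 0 < η) (ha : Measurable a)
    (hf : Measurable f) (haA : ∀ᵐ x ∂μ, |a x| ≤ A) (hfB : ∀ᵐ x ∂μ, |f x| ≤ B)
    (hν : ν = μ.tilted f) (hT : T = μ.tilted fun x => (a x + f x) / (1 + η)) :
    proximalObjective μ ν a η ρ ≤ proximalObjective μ ν a η T ∧
      (proximalObjective μ ν a η ρ = proximalObjective μ ν a η T ↔ ρ = T) := by
  subst hν hT
  set g : X → ℝ := fun x => (a x + f x) / (1 + η)
  have hη' : 0 < 1 + η := by linarith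
  have hg : Measurable g := by fun_prop
  have hgB : ∀ᵐ x ∂μ, |g x| ≤ (A + B) / (1 + η) := by
    filter_upwards [haA, hfB] with x hxa hxf
    rw [abs_div, abs_of_pos hη']
    exact div_le_div_of_nonneg_right ((abs_add_le _ _).trans (add_le_add hxa hxf)) hη'.le
  have hexpf := integrable_exp_of_ae_abs_le hf.aemeasurable hfB
  have hexpg := integrable_exp_of_ae_abs_le hg.aemeasurable hgB
  have hobjective (ρ : Measure X) [IsProbabilityMeasure ρ] (hρ : ρ ≪ μ)
      (hllr : Integrable (llr ρ μ) ρ) :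
      proximalObjective μ (μ.tilted f) a η ρ = (((1 + η) * log (∫ x, exp (g x) ∂μ)
        - log (∫ x, exp (f x) ∂μ) - (1 + η) * ∫ x, llr ρ (μ.tilted g) x ∂ρ : ℝ) : EReal) :=
    proximalObjective_tilted_eq hη'.ne' hρ hllr
      (.of_ae_abs_le_of_absolutelyContinuous hρ ha.aestronglyMeasurable haA)
      (.of_ae_abs_le_of_absolutelyContinuous hρ hf.aestronglyMeasurable hfB) hexpf hexpg
  have := isProbabilityMeasure_tilted hexpg
  have hTμ : μ.tilted g ≪ μ := tilted_absolutelyContinuous μ g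
  have hTllr : Integrable (llr (μ.tilted g) μ) (μ.tilted g) := integrable_llr_tilted_self
    (.of_ae_abs_le_of_absolutelyContinuous hTμ hg.aestronglyMeasurable hgB) hexpg
  rw [hobjective _ hTμ hTllr]
  by_cases hgood : ρ ≪ μ ∧ Integrable (llr ρ μ) ρ
  · rw [hobjective ρ hgood.1 hgood.2]
    refine coe_sub_mul_integral_llr_le_and_eq_iff hη'
      (hgood.1.trans (absolutelyContinuous_tilted hexpg)) ?_
    exact integrable_llr_tilted_right hgood.1 (.of_ae_abs_le_of_absolutelyContinuous
      hgood.1 hg.aestronglyMeasurable hgB) hgood.2 hexpg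
  · rw [proximalObjective_eq_bot hη hgood]
    exact ⟨bot_le, fun h => absurd h.symm (EReal.coe_ne_bot _),
      fun h => absurd (h ▸ ⟨hTμ, hTllr⟩) hgood⟩
end

theorem proximal_objective_unique_maximizer_general
    {X : Type*} [MeasurableSpace X]
    (π_ref : Measure X) [IsProbabilityMeasure π_ref]
    (R : X → ℝ) (hRmeas : Measurable R) (M : ℝ) (hRbd : ∀ x, |R x| ≤ M)
    (β : ℝ) (η : ℝ) (hη : 0 < η) (b : ℝ)
    (ε C : ℝ) (hε : 0 < ε)
    (q : X → ℝ) (hqmeas : Measurable q)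
    (hqbd : ∀ᵐ x ∂π_ref, ε ≤ q x ∧ q x ≤ C)
    (ν : Measure X) [IsProbabilityMeasure ν]
    (hν : ν = π_ref.withDensity (fun x => ENNReal.ofReal (q x)))
    (N : ℝ)
    (hN : N = ∫ x, Real.exp (η * R x / ((1 + η) * β)) * q x ^ ((1 : ℝ) / (1 + η)) ∂π_ref)
    (Tν : Measure X)
    (hTν : Tν = π_ref.withDensity (fun x =>
      ENNReal.ofReal (Real.exp (η * R x / ((1 + η) * β)) * q x ^ ((1 : ℝ) / (1 + η)) / N)))
    (F : Measure X → EReal)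
    (hF : ∀ π : Measure X,
      F π = ((∫ x, (η / β) * (R x - b) ∂π : ℝ) : EReal)
        - klDiv π ν - (η : EReal) * klDiv π π_ref)
    (π : Measure X) [IsProbabilityMeasure π] :
    F π ≤ F Tν ∧ (F π = F Tν ↔ π = Tν) := by
  have hq_pos : ∀ᵐ x ∂π_ref, 0 < q x := hqbd.mono fun x hx => hε.trans_le hx.1
  have hlogq : ∀ᵐ x ∂π_ref, |Real.log (q x)| ≤ max |Real.log ε| |Real.log C| :=
    hqbd.mono fun x hx => abs_le_max_abs_abs (Real.log_le_log hε hx.1)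
      (Real.log_le_log (hε.trans_le hx.1) hx.2)
  have hA (x : X) : |(η / β) * (R x - b)| ≤ |η / β| * (M + |b|) := by
    rw [abs_mul]
    exact mul_le_mul_of_nonneg_left ((abs_sub _ _).trans (by linarith [hRbd x])) (abs_nonneg _)
  have hq_int : Integrable q π_ref := .of_bound hqmeas.aestronglyMeasurable C <|
    hqbd.mono fun x hx => by rw [Real.norm_of_nonneg (hε.le.trans hx.1)]; exact hx.2
  have hT : Tν = π_ref.tilted fun x => ((η / β) * (R x - b) + Real.log (q x)) / (1 + η) := by
    have hp_pos : ∀ᵐ x ∂π_ref,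
        0 < Real.exp (η * R x / ((1 + η) * β)) * q x ^ ((1 : ℝ) / (1 + η)) :=
      hq_pos.mono fun x hx => by positivity
    rw [hTν, hN, ← tilted_log_eq_withDensity hp_pos,
      ← tilted_add_const _ _ (-(η * b / ((1 + η) * β)))]
    refine tilted_congr (hq_pos.mono fun x hx => ?_)
    dsimp only
    rw [Real.log_mul (Real.exp_pos _).ne' (by positivity), Real.log_exp, Real.log_rpow hx]
    simp only [div_eq_mul_inv, mul_inv]
    ring
  rw [show F = proximalObjective π_ref ν (fun x => (η / β) * (R x - b)) η from funext hF]
  exact proximalObjective_le_and_eq_iff hη (by fun_prop) (by fun_prop) (ae_of_all _ hA) hlogq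
    (eq_tilted_log_of_eq_withDensity hν hq_int hq_pos) hT

/-- With `A(x) = (η/β)(R(x) − b)` and `ν` a probability measure with density `q`
(with `0 < ε ≤ q ≤ C` a.e.) w.r.t. `π_ref`, the proximal objective
`F(π) = ∫ A dπ − KL(π‖ν) − η·KL(π‖π_ref)` is uniquely maximized at the geometric
mixture `T(ν)` with density `exp(ηR/((1+η)β))·q^{1/(1+η)} / N(ν)` w.r.t. `π_ref`,
independently of the baseline `b`. -/
theorem proximal_objective_unique_maximizer
    {X : Type*} [MeasurableSpace X]
    (π_ref : Measure X) [IsProbabilityMeasure π_ref]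
    (R : X → ℝ) (hRmeas : Measurable R) (M : ℝ) (hRbd : ∀ x, |R x| ≤ M)
    (β : ℝ) (hβ : 0 < β) (η : ℝ) (hη : 0 < η) (b : ℝ)
    (ε C : ℝ) (hε : 0 < ε)
    (q : X → ℝ) (hqmeas : Measurable q)
    (hqbd : ∀ᵐ x ∂π_ref, ε ≤ q x ∧ q x ≤ C)
    (ν : Measure X) [IsProbabilityMeasure ν]
    (hν : ν = π_ref.withDensity (fun x => ENNReal.ofReal (q x)))
    (N : ℝ)
    (hN : N = ∫ x, Real.exp (η * R x / ((1 + η) * β)) * q x ^ ((1 : ℝ) / (1 + η)) ∂π_ref)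
    (Tν : Measure X)
    (hTν : Tν = π_ref.withDensity (fun x =>
      ENNReal.ofReal (Real.exp (η * R x / ((1 + η) * β)) * q x ^ ((1 : ℝ) / (1 + η)) / N)))
    (F : Measure X → EReal)
    (hF : ∀ π : Measure X,
      F π = ((∫ x, (η / β) * (R x - b) ∂π : ℝ) : EReal)
        - klDiv π ν - (η : EReal) * klDiv π π_ref)
    (π : Measure X) [IsProbabilityMeasure π] :
    F π ≤ F Tν ∧ (F π = F Tν ↔ π = Tν) :=
  proximal_objective_unique_maximizer_general π_ref R hRmeas M hRbd β η hη b ε C hε q hqmeas hqbd ν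
    hν N hN Tν hTν F hF π
end

section
/- The Gibbs measure π* is the unique fixed point of the proximal update among probability measures with bounded positive density: if ν is a probability measure with density q with respect to π_ref satisfying 0 < ε ≤ q ≤ C π_ref-a.e. and T(ν) = ν, then ν = π*. -/
open MeasureTheory Real

/-!
At a fixed point the density relation `q = exp(ηR/((1+η)β)) q^{1/(1+η)} / N` holds a.e., and
since `q > 0` it can be solved for `q`: `q^{η/(1+η)} = exp(ηR/((1+η)β)) / N`, i.e.
`q = exp(R/β) / K` with the constant `K = N^{(1+η)/η}`. As `q` is a probability density,
integrating gives `K = Z`, so `ν = π*`.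
-/

lemma rpow_one_sub_eq_of_mul_rpow_eq {c q t : ℝ} (hq : 0 < q) (h : c * q ^ t = q) :
    q ^ (1 - t) = c := by
  rw [rpow_sub hq, rpow_one, div_eq_iff (rpow_pos_of_pos hq t).ne', h]

lemma eq_exp_div_rpow_of_proximal_fixed_point {r η N q : ℝ} (hη : 0 < η) (hq : 0 < q)
    (h : exp (η * r / (1 + η)) * q ^ (1 / (1 + η)) / N = q) :
    q = exp r / N ^ ((1 + η) / η) := by
  have hc : q ^ (η / (1 + η)) = exp (η * r / (1 + η)) / N := by
    have hs : 1 - 1 / (1 + η) = η / (1 + η) := by field_simp; ring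
    rw [← hs]
    exact rpow_one_sub_eq_of_mul_rpow_eq hq (by rwa [div_mul_eq_mul_div])
  have hN : 0 < N := (div_pos_iff_of_pos_left (exp_pos _)).mp (hc ▸ rpow_pos_of_pos hq _)
  rw [← rpow_rpow_inv hq.le (by positivity : η / (1 + η) ≠ 0), hc, inv_div,
    div_rpow (exp_pos _).le hN.le, ← exp_mul]
  congr 2
  field_simp

section

variable {X : Type*} [MeasurableSpace X] {μ : Measure X}

lemma ae_eq_of_withDensity_ofReal_eq [SigmaFinite μ] {f g : X → ℝ} (hf : AEMeasurable f μ)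
    (hg : AEMeasurable g μ) (hg_pos : ∀ᵐ x ∂μ, 0 < g x)
    (h : μ.withDensity (fun x => ENNReal.ofReal (f x)) =
      μ.withDensity (fun x => ENNReal.ofReal (g x))) :
    f =ᵐ[μ] g := by
  rw [withDensity_eq_iff_of_sigmaFinite hf.ennreal_ofReal hg.ennreal_ofReal] at h
  filter_upwards [h, hg_pos] with x hx hgx
  have hfx : 0 < f x := ENNReal.ofReal_pos.mp (hx ▸ ENNReal.ofReal_pos.mpr hgx)
  exact (ENNReal.ofReal_eq_ofReal_iff hfx.le hgx.le).mp hx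

lemma integral_eq_one_of_isProbabilityMeasure_withDensity {q : X → ℝ}
    (hq : AEStronglyMeasurable q μ) (hq_nonneg : 0 ≤ᵐ[μ] q)
    [IsProbabilityMeasure (μ.withDensity fun x => ENNReal.ofReal (q x))] :
    ∫ x, q x ∂μ = 1 := by
  have h := measure_univ (μ := μ.withDensity fun x => ENNReal.ofReal (q x))
  rw [withDensity_apply _ MeasurableSet.univ, Measure.restrict_univ] at h
  rw [integral_eq_lintegral_of_nonneg_ae hq_nonneg hq, h, ENNReal.toReal_one]

lemma ae_eq_div_integral_of_ae_eq_div {q g : X → ℝ} {K : ℝ} (hq : ∫ x, q x ∂μ = 1)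
    (h : q =ᵐ[μ] fun x => g x / K) :
    q =ᵐ[μ] fun x => g x / ∫ x, g x ∂μ := by
  have hK : (∫ x, g x ∂μ) / K = 1 := by rw [← integral_div, ← integral_congr_ae h, hq]
  have hK₀ : K ≠ 0 := by rintro rfl; simp at hK
  rwa [(div_eq_one_iff_eq hK₀).mp hK]

end

theorem gibbs_unique_fixed_point_of_proximal_update_general
    {X : Type*} [MeasurableSpace X]
    (π_ref : Measure X) [IsProbabilityMeasure π_ref]
    (R : X → ℝ) (hRmeas : Measurable R)
    (β : ℝ) (η : ℝ) (hη : 0 < η)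
    (Z : ℝ) (hZ : Z = ∫ x, Real.exp (R x / β) ∂π_ref)
    (πstar : Measure X)
    (hπstar : πstar = π_ref.withDensity (fun x => ENNReal.ofReal (Real.exp (R x / β) / Z)))
    (ε C : ℝ) (hε : 0 < ε)
    (q : X → ℝ) (hqmeas : Measurable q)
    (hqbd : ∀ᵐ x ∂π_ref, ε ≤ q x ∧ q x ≤ C)
    (ν : Measure X) [IsProbabilityMeasure ν]
    (hν : ν = π_ref.withDensity (fun x => ENNReal.ofReal (q x)))
    (N : ℝ)
    (hfixed : π_ref.withDensity (fun x =>
      ENNReal.ofReal (Real.exp (η * R x / ((1 + η) * β)) * q x ^ ((1 : ℝ) / (1 + η)) / N)) = ν) :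
    ν = πstar := by
  subst hν hπstar hZ
  have hq_pos : ∀ᵐ x ∂π_ref, 0 < q x := hqbd.mono fun x hx => hε.trans_le hx.1
  have hdens := ae_eq_of_withDensity_ofReal_eq (by fun_prop) hqmeas.aemeasurable hq_pos hfixed
  have hgibbs : q =ᵐ[π_ref] fun x => exp (R x / β) / N ^ ((1 + η) / η) := by
    filter_upwards [hdens, hq_pos] with x hx hqx
    refine eq_exp_div_rpow_of_proximal_fixed_point hη hqx ?_
    rwa [show η * (R x / β) / (1 + η) = η * R x / ((1 + η) * β) by rw [mul_div_assoc', div_div, mul_comm β]]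
  have hint := integral_eq_one_of_isProbabilityMeasure_withDensity hqmeas.aestronglyMeasurable
    (hq_pos.mono fun x hx => hx.le)
  exact withDensity_congr_ae <| (ae_eq_div_integral_of_ae_eq_div hint hgibbs).fun_comp ENNReal.ofReal

/-- The Gibbs measure `π*` is the unique fixed point of the proximal update among
probability measures with bounded positive density: if `ν` has density `q` w.r.t. `π_ref`
with `0 < ε ≤ q ≤ C` a.e. and `T(ν) = ν`, then `ν = π*`. -/
theorem gibbs_unique_fixed_point_of_proximal_update
    {X : Type*} [MeasurableSpace X]
    (π_ref : Measure X) [IsProbabilityMeasure π_ref]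
    (R : X → ℝ) (hRmeas : Measurable R) (M : ℝ) (hRbd : ∀ x, |R x| ≤ M)
    (β : ℝ) (hβ : 0 < β) (η : ℝ) (hη : 0 < η)
    (Z : ℝ) (hZ : Z = ∫ x, Real.exp (R x / β) ∂π_ref)
    (πstar : Measure X)
    (hπstar : πstar = π_ref.withDensity (fun x => ENNReal.ofReal (Real.exp (R x / β) / Z)))
    (ε C : ℝ) (hε : 0 < ε)
    (q : X → ℝ) (hqmeas : Measurable q)
    (hqbd : ∀ᵐ x ∂π_ref, ε ≤ q x ∧ q x ≤ C)
    (ν : Measure X) [IsProbabilityMeasure ν]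
    (hν : ν = π_ref.withDensity (fun x => ENNReal.ofReal (q x)))
    (N : ℝ)
    (hN : N = ∫ x, Real.exp (η * R x / ((1 + η) * β)) * q x ^ ((1 : ℝ) / (1 + η)) ∂π_ref)
    (hfixed : π_ref.withDensity (fun x =>
      ENNReal.ofReal (Real.exp (η * R x / ((1 + η) * β)) * q x ^ ((1 : ℝ) / (1 + η)) / N)) = ν) :
    ν = πstar :=
  gibbs_unique_fixed_point_of_proximal_update_general π_ref R hRmeas β η hη Z hZ πstar hπstar ε C hε
    q hqmeas hqbd ν hν N hfixed
end

section
/- Define the iterates π_0 = π_ref and π_{k+1} = T(π_k) for k ≥ 0. Then for every k ≥ 0, π_k has density with respect to π_ref given by dπ_k/dπ_ref(x) = exp((1 − (1+η)^{−k})·R(x)/β) / Z_k, where Z_k = ∫ exp((1 − (1+η)^{−k})·R/β) dπ_ref. -/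
/-!
Exponential tilts of `π_ref` are stable under the proximal update: if `dν/dπ_ref ∝ exp f` then
`dT(ν)/dπ_ref ∝ exp (a) · exp (f)^p = exp (a + p f)` with `a = ηR/((1+η)β)` and `p = 1/(1+η)`, the
normalising constant of `ν` cancelling against that of `T(ν)`. Starting from `f = 0`, the iterates are
therefore the tilts by `c_k R/β`, where `c_0 = 0` and `c_{k+1} = (η + c_k)/(1+η)`, i.e.
`c_k = 1 - (1+η)^{-k}`.
-/

open MeasureTheory Real

namespace MeasureTheory

variable {X : Type*} [MeasurableSpace X] {μ : Measure X}

lemma integrable_exp_of_abs_le [IsFiniteMeasure μ] {f : X → ℝ} (hf : AEMeasurable f μ) {M : ℝ}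
    (hM : ∀ x, |f x| ≤ M) : Integrable (fun x => exp (f x)) μ :=
  .of_bound (measurable_exp.comp_aemeasurable hf).aestronglyMeasurable (exp M) <|
    ae_of_all _ fun x => by
      rw [norm_of_nonneg (exp_pos _).le]
      exact exp_le_exp.2 ((le_abs_self _).trans (hM x))

noncomputable def Measure.proximalUpdate (μ : Measure X) (a : X → ℝ) (p : ℝ) (ν : Measure X) :
    Measure X :=
  μ.withDensity fun x => ENNReal.ofReal (exp (a x) * (ν.rnDeriv μ x).toReal ^ p /
    ∫ y, exp (a y) * (ν.rnDeriv μ y).toReal ^ p ∂μ)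

lemma proximalUpdate_tilted [SigmaFinite μ] [NeZero μ] {f : X → ℝ}
    (hf : Integrable (fun x => exp (f x)) μ) (a : X → ℝ) (p : ℝ) :
    μ.proximalUpdate a p (μ.tilted f) = μ.tilted fun x => a x + p * f x := by
  set Z := ∫ x, exp (f x) ∂μ
  have hZ : 0 < Z := integral_exp_pos hf
  have hZp : Z ^ p ≠ 0 := (rpow_pos_of_pos hZ p).ne'
  have hdens : (fun x => exp (a x) * ((μ.tilted f).rnDeriv μ x).toReal ^ p)
      =ᵐ[μ] fun x => exp (a x + p * f x) / Z ^ p := by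
    filter_upwards [rnDeriv_tilted_left_self (aemeasurable_of_aemeasurable_exp hf.1.aemeasurable)]
      with x hx
    rw [hx, ENNReal.toReal_ofReal (by positivity), div_rpow (exp_pos _).le hZ.le, ← exp_mul,
      mul_div_assoc', ← exp_add, mul_comm (f x)]
  refine withDensity_congr_ae ?_
  filter_upwards [hdens] with x hx
  rw [integral_congr_ae hdens, integral_div, hx, div_div_div_cancel_right₀ hZp]

end MeasureTheory

theorem proximal_iterates_density_general
    {X : Type*} [MeasurableSpace X]
    (π_ref : Measure X) [IsProbabilityMeasure π_ref]
    (R : X → ℝ) (hRmeas : Measurable R) (M : ℝ) (hRbd : ∀ x, |R x| ≤ M)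
    (β : ℝ) (η : ℝ) (hη : 0 < η)
    (πseq : ℕ → Measure X)
    (h0 : πseq 0 = π_ref)
    (hrec : ∀ k : ℕ, πseq (k + 1) = π_ref.withDensity (fun x =>
      ENNReal.ofReal (Real.exp (η * R x / ((1 + η) * β))
        * ((πseq k).rnDeriv π_ref x).toReal ^ ((1 : ℝ) / (1 + η))
        / (∫ y, Real.exp (η * R y / ((1 + η) * β))
            * ((πseq k).rnDeriv π_ref y).toReal ^ ((1 : ℝ) / (1 + η)) ∂π_ref)))) :
    ∀ k : ℕ, πseq k = π_ref.withDensity (fun x =>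
      ENNReal.ofReal (Real.exp ((1 - ((1 + η) ^ k)⁻¹) * R x / β)
        / (∫ y, Real.exp ((1 - ((1 + η) ^ k)⁻¹) * R y / β) ∂π_ref))) := by
  have hη' : 1 + η ≠ 0 := by positivity
  have hint (c : ℝ) : Integrable (fun x => exp (c * R x / β)) π_ref :=
    integrable_exp_of_abs_le ((hRmeas.const_mul c).div_const β).aemeasurable
      (M := |c| * M / |β|) fun x => by
        rw [abs_div, abs_mul]
        gcongr
        exact hRbd x
  have hexp (k : ℕ) : (η + (1 - ((1 + η) ^ k)⁻¹)) / (1 + η) = 1 - ((1 + η) ^ (k + 1))⁻¹ := by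
    field_simp
    ring
  suffices ∀ k, πseq k = π_ref.tilted fun x => (1 - ((1 + η) ^ k)⁻¹) * R x / β from this
  intro k
  induction k with
  | zero => simp [h0]
  | succ k ih =>
    calc πseq (k + 1)
        = π_ref.proximalUpdate (fun x => η * R x / ((1 + η) * β)) (1 / (1 + η)) (πseq k) := hrec k
      _ = _ := by rw [ih, proximalUpdate_tilted (hint _)]
      _ = _ := by
        congr 1; ext x
        rw [← hexp, mul_comm (1 + η) β, ← div_div]
        ring

/-- For the proximal iterates `π_0 = π_ref`, `π_{k+1} = T(π_k)` (where `T(ν)` has density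
`exp(ηR/((1+η)β))·q^{1/(1+η)} / N(ν)` w.r.t. `π_ref`, `q` being the density of `ν`),
each iterate `π_k` has density `exp((1 − (1+η)^{−k})·R/β) / Z_k` with respect to `π_ref`,
where `Z_k = ∫ exp((1 − (1+η)^{−k})·R/β) dπ_ref`. -/
theorem proximal_iterates_density
    {X : Type*} [MeasurableSpace X]
    (π_ref : Measure X) [IsProbabilityMeasure π_ref]
    (R : X → ℝ) (hRmeas : Measurable R) (M : ℝ) (hRbd : ∀ x, |R x| ≤ M)
    (β : ℝ) (hβ : 0 < β) (η : ℝ) (hη : 0 < η)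
    (πseq : ℕ → Measure X)
    (h0 : πseq 0 = π_ref)
    (hrec : ∀ k : ℕ, πseq (k + 1) = π_ref.withDensity (fun x =>
      ENNReal.ofReal (Real.exp (η * R x / ((1 + η) * β))
        * ((πseq k).rnDeriv π_ref x).toReal ^ ((1 : ℝ) / (1 + η))
        / (∫ y, Real.exp (η * R y / ((1 + η) * β))
            * ((πseq k).rnDeriv π_ref y).toReal ^ ((1 : ℝ) / (1 + η)) ∂π_ref)))) :
    ∀ k : ℕ, πseq k = π_ref.withDensity (fun x =>
      ENNReal.ofReal (Real.exp ((1 - ((1 + η) ^ k)⁻¹) * R x / β)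
        / (∫ y, Real.exp ((1 - ((1 + η) ^ k)⁻¹) * R y / β) ∂π_ref))) :=
  proximal_iterates_density_general π_ref R hRmeas M hRbd β η hη πseq h0 hrec
end

section
/- Define the iterates π_0 = π_ref and π_{k+1} = T(π_k), and suppose |R(x)| ≤ M for all x. Then for every k ≥ 0, KL(π_k‖π*) ≤ (2M/β)·(1+η)^{−k}; in particular KL(π_k‖π*) → 0 as k → ∞, so the proximal policy-gradient iteration converges to the target Gibbs measure π* at a geometric rate. -/
open MeasureTheory

/-!
Every iterate is a Gibbs measure: the proximal update maps the tilt `π_ref.tilted (a R)` to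
`π_ref.tilted ((η/β + a) R / (1 + η))`, so `π_k = π_ref.tilted (a_k R)` with
`a_k = (1 - (1 + η)^{-k}) / β`, and `|a_k - 1/β| = (1 + η)^{-k} / β`. For two tilts of the
same measure with `|f - g| ≤ B`, the log-likelihood ratio is `f - g + log Z_g - log Z_f`, and
both the mean of `f - g` and the difference of log-partition functions are bounded by `B`.
-/

open Real ProbabilityTheory

namespace MeasureTheory

variable {X : Type*} [MeasurableSpace X] {μ : Measure X} {f g : X → ℝ}

lemma log_integral_exp_le_add [NeZero μ] {B : ℝ} (hf : Integrable (fun x ↦ exp (f x)) μ)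
    (hg : Integrable (fun x ↦ exp (g x)) μ) (hfg : ∀ x, f x ≤ g x + B) :
    log (∫ x, exp (f x) ∂μ) ≤ log (∫ x, exp (g x) ∂μ) + B := by
  have hle : ∫ x, exp (f x) ∂μ ≤ (∫ x, exp (g x) ∂μ) * exp B := by
    rw [← integral_mul_const]
    refine integral_mono hf (hg.mul_const _) fun x ↦ ?_
    simpa only [← exp_add] using exp_le_exp.mpr (hfg x)
  calc log (∫ x, exp (f x) ∂μ) ≤ log ((∫ x, exp (g x) ∂μ) * exp B) :=
        log_le_log (integral_exp_pos hf) hle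
    _ = log (∫ x, exp (g x) ∂μ) + B := by
        rw [log_mul (integral_exp_pos hg).ne' (exp_pos B).ne', log_exp]

lemma abs_log_integral_exp_sub_le [NeZero μ] {B : ℝ} (hf : Integrable (fun x ↦ exp (f x)) μ)
    (hg : Integrable (fun x ↦ exp (g x)) μ) (hfg : ∀ x, |f x - g x| ≤ B) :
    |log (∫ x, exp (f x) ∂μ) - log (∫ x, exp (g x) ∂μ)| ≤ B := by
  have h₁ := log_integral_exp_le_add hf hg fun x ↦ by linarith [(abs_le.mp (hfg x)).2]
  have h₂ := log_integral_exp_le_add hg hf fun x ↦ by linarith [(abs_le.mp (hfg x)).1]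
  exact abs_sub_le_iff.mpr ⟨by linarith, by linarith⟩

lemma llr_tilted_tilted [IsFiniteMeasure μ] (hf : Integrable (fun x ↦ exp (f x)) μ)
    (hg : Integrable (fun x ↦ exp (g x)) μ) :
    llr (μ.tilted f) (μ.tilted g) =ᵐ[μ.tilted f]
      fun x ↦ f x - g x + (log (∫ x, exp (g x) ∂μ) - log (∫ x, exp (f x) ∂μ)) := by
  have hac := tilted_absolutelyContinuous μ f
  filter_upwards [llr_tilted_right hac hg, hac.ae_le (log_rnDeriv_tilted_left_self hf)]
    with x hright hleft
  rw [hright, llr_def]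
  simp only [hleft]
  ring

lemma klDiv_tilted_tilted [IsProbabilityMeasure μ] (hf : Integrable (fun x ↦ exp (f x)) μ)
    (hg : Integrable (fun x ↦ exp (g x)) μ)
    (hfg : Integrable (fun x ↦ f x - g x) (μ.tilted f)) :
    klDiv (μ.tilted f) (μ.tilted g) = ((∫ x, f x - g x ∂μ.tilted f
      + (log (∫ x, exp (g x) ∂μ) - log (∫ x, exp (f x) ∂μ)) : ℝ) : EReal) := by
  have := isProbabilityMeasure_tilted hf
  have hllr := llr_tilted_tilted hf hg
  have hac : μ.tilted f ≪ μ.tilted g :=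
    (tilted_absolutelyContinuous μ f).trans (absolutelyContinuous_tilted hg)
  have hint : Integrable (llr (μ.tilted f) (μ.tilted g)) (μ.tilted f) :=
    (hfg.add (integrable_const _)).congr hllr.symm
  rw [klDiv, if_pos ⟨hac, hint⟩, integral_congr_ae hllr, integral_add hfg (integrable_const _),
    integral_const, probReal_univ, one_smul]

lemma exists_klDiv_tilted_tilted_eq_abs_le [IsProbabilityMeasure μ] {B : ℝ}
    (hf : Measurable f) (hg : Measurable g) (hfi : Integrable (fun x ↦ exp (f x)) μ)
    (hgi : Integrable (fun x ↦ exp (g x)) μ) (hfg : ∀ x, |f x - g x| ≤ B) :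
    ∃ I : ℝ, klDiv (μ.tilted f) (μ.tilted g) = I ∧ |I| ≤ 2 * B := by
  have := isProbabilityMeasure_tilted hfi
  have hbound : ∀ x, ‖f x - g x‖ ≤ B := fun x ↦ (norm_eq_abs _).trans_le (hfg x)
  have hint : Integrable (fun x ↦ f x - g x) (μ.tilted f) :=
    .of_bound (hf.sub hg).aestronglyMeasurable B (.of_forall hbound)
  refine ⟨_, klDiv_tilted_tilted hfi hgi hint, ?_⟩
  have hmean : |∫ x, f x - g x ∂μ.tilted f| ≤ B := by
    simpa only [probReal_univ, mul_one, norm_eq_abs] using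
      norm_integral_le_of_norm_le_const (μ := μ.tilted f) (.of_forall hbound)
  have hlog := abs_log_integral_exp_sub_le hgi hfi fun x ↦ (abs_sub_comm _ _).trans_le (hfg x)
  linarith [abs_add_le (∫ x, f x - g x ∂μ.tilted f)
    (log (∫ x, exp (g x) ∂μ) - log (∫ x, exp (f x) ∂μ))]

/-- `T(ν) = proximalStep π_ref (η R / ((1 + η) β)) (1 / (1 + η)) ν`. -/
noncomputable def proximalStep (μ : Measure X) (f : X → ℝ) (s : ℝ) (ν : Measure X) :
    Measure X :=
  μ.withDensity fun x ↦ ENNReal.ofReal (exp (f x) * (ν.rnDeriv μ x).toReal ^ s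
    / ∫ y, exp (f y) * (ν.rnDeriv μ y).toReal ^ s ∂μ)

lemma proximalStep_tilted [IsFiniteMeasure μ] [NeZero μ] (s : ℝ)
    (hg : Integrable (fun x ↦ exp (g x)) μ) (hgm : AEMeasurable g μ) :
    proximalStep μ f s (μ.tilted g) = μ.tilted fun x ↦ f x + s * g x := by
  have hZ := integral_exp_pos hg
  have hdens : (fun x ↦ exp (f x) * ((μ.tilted g).rnDeriv μ x).toReal ^ s) =ᵐ[μ]
      fun x ↦ exp (f x + s * g x) / (∫ x, exp (g x) ∂μ) ^ s := by
    filter_upwards [rnDeriv_tilted_left_self hgm] with x hx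
    rw [hx, ENNReal.toReal_ofReal (by positivity), div_rpow (exp_pos _).le hZ.le, ← exp_mul,
      mul_div_assoc', ← exp_add, mul_comm (g x)]
  rw [proximalStep, integral_congr_ae hdens, integral_div]
  conv_rhs => rw [Measure.tilted]
  refine withDensity_congr_ae ?_
  filter_upwards [hdens] with x hx
  rw [hx, div_div_div_cancel_right₀ (rpow_pos_of_pos hZ s).ne']

lemma proximalStep_iterates_eq_tilted [IsProbabilityMeasure μ] {R : X → ℝ} (hR : Measurable R)
    (hexp : ∀ c, Integrable (fun x ↦ exp (c * R x)) μ) {β η : ℝ} (hβ : β ≠ 0)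
    (hη : 1 + η ≠ 0) (ν : ℕ → Measure X) (h0 : ν 0 = μ)
    (hrec : ∀ k, ν (k + 1) =
      proximalStep μ (fun x ↦ η * R x / ((1 + η) * β)) (1 / (1 + η)) (ν k))
    (k : ℕ) : ν k = μ.tilted fun x ↦ (1 - ((1 + η) ^ k)⁻¹) / β * R x := by
  induction k with
  | zero => simp [h0]
  | succ k ih =>
    rw [hrec, ih, proximalStep_tilted _ (hexp _) (by fun_prop)]
    congr 1
    funext x
    field_simp
    ring

end MeasureTheory

/-- For the proximal iterates `π_0 = π_ref`, `π_{k+1} = T(π_k)` and a reward with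
`|R| ≤ M`, one has `KL(π_k‖π*) ≤ (2M/β)·(1+η)^{−k}` for all `k`; in particular
`KL(π_k‖π*) → 0`, i.e. the proximal policy-gradient iteration converges to the target
Gibbs measure `π*` at a geometric rate. -/
theorem proximal_iterates_geometric_convergence
    {X : Type*} [MeasurableSpace X]
    (π_ref : Measure X) [IsProbabilityMeasure π_ref]
    (R : X → ℝ) (hRmeas : Measurable R) (M : ℝ) (hRbd : ∀ x, |R x| ≤ M)
    (β : ℝ) (hβ : 0 < β) (η : ℝ) (hη : 0 < η)
    (Z : ℝ) (hZ : Z = ∫ x, Real.exp (R x / β) ∂π_ref)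
    (πstar : Measure X)
    (hπstar : πstar = π_ref.withDensity (fun x => ENNReal.ofReal (Real.exp (R x / β) / Z)))
    (πseq : ℕ → Measure X)
    (h0 : πseq 0 = π_ref)
    (hrec : ∀ k : ℕ, πseq (k + 1) = π_ref.withDensity (fun x =>
      ENNReal.ofReal (Real.exp (η * R x / ((1 + η) * β))
        * ((πseq k).rnDeriv π_ref x).toReal ^ ((1 : ℝ) / (1 + η))
        / (∫ y, Real.exp (η * R y / ((1 + η) * β))
            * ((πseq k).rnDeriv π_ref y).toReal ^ ((1 : ℝ) / (1 + η)) ∂π_ref)))) :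
    (∀ k : ℕ, klDiv (πseq k) πstar ≤ ((2 * M / β * ((1 + η) ^ k)⁻¹ : ℝ) : EReal))
    ∧ Filter.Tendsto (fun k => klDiv (πseq k) πstar) Filter.atTop (nhds 0) := by
  let a : ℕ → ℝ := fun k ↦ (1 - ((1 + η) ^ k)⁻¹) / β
  have hexp (c : ℝ) : Integrable (fun x ↦ exp (c * R x)) π_ref :=
    integrable_exp_mul_of_mem_Icc hRmeas.aemeasurable (.of_forall fun x ↦ abs_le.mp (hRbd x))
  have hseq (k : ℕ) : πseq k = π_ref.tilted fun x ↦ a k * R x :=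
    proximalStep_iterates_eq_tilted hRmeas hexp hβ.ne' (by linarith) πseq h0 hrec k
  have hstar : πstar = π_ref.tilted fun x ↦ R x / β := by rw [hπstar, hZ]; rfl
  have hdist (k : ℕ) (x : X) : |a k * R x - R x / β| ≤ M / β * ((1 + η) ^ k)⁻¹ := by
    have hdiff : a k * R x - R x / β = -(((1 + η) ^ k)⁻¹ / β * R x) := by ring
    calc |a k * R x - R x / β| = ((1 + η) ^ k)⁻¹ / β * |R x| := by
          rw [hdiff, abs_neg, abs_mul, abs_of_pos (by positivity)]
      _ ≤ ((1 + η) ^ k)⁻¹ / β * M := by gcongr; exact hRbd x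
      _ = M / β * ((1 + η) ^ k)⁻¹ := by ring
  have hkl (k : ℕ) :
      ∃ I : ℝ, klDiv (πseq k) πstar = I ∧ |I| ≤ 2 * M / β * ((1 + η) ^ k)⁻¹ := by
    rw [hseq, hstar, mul_div_assoc, mul_assoc]
    exact exists_klDiv_tilted_tilted_eq_abs_le (by fun_prop) (by fun_prop) (hexp _)
      ((hexp β⁻¹).congr (.of_forall fun x ↦ by simp only [div_eq_inv_mul])) (hdist k)
  choose I hI hIbd using hkl
  have hrate :
      Filter.Tendsto (fun k : ℕ ↦ 2 * M / β * ((1 + η) ^ k)⁻¹) Filter.atTop (nhds 0) := by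
    simpa using (tendsto_inv_atTop_zero.comp
      (tendsto_pow_atTop_atTop_of_one_lt (by linarith : 1 < 1 + η))).const_mul (2 * M / β)
  refine ⟨fun k ↦ ?_, ?_⟩
  · rw [hI k]
    exact EReal.coe_le_coe_iff.mpr (le_of_abs_le (hIbd k))
  · simp_rw [hI]
    exact EReal.tendsto_coe.mpr (squeeze_zero_norm hIbd hrate)
end

section
/- For every θ₀ ∈ ℝ, the stop-gradient PEPG surrogate has the same θ-gradient as the proximal objective: (d/dθ) [ Σ_{x ∈ X} π_old(x)·(A(x) − log(p(θ₀, x)/π_old(x)))·(p(θ₀, x)/π_old(x))·log p(θ, x) ] evaluated at θ = θ₀ equals (d/dθ) [ Σ_{x ∈ X} A(x)·p(θ, x) − Σ_{x ∈ X} p(θ, x)·log(p(θ, x)/π_old(x)) ] evaluated at θ = θ₀. -/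
/-! Both derivatives are sums of per-outcome terms driven by `p'(θ₀, x)`. By `p · (log p)' = p'`
the surrogate term contributes `(A(x) − log(p(θ₀,x)/π_old(x))) · p'(θ₀,x)`, while the proximal
term contributes the same minus `p'(θ₀,x)`; these extra terms sum to zero because `Σ_x p(θ, x)`
is constant in `θ`. -/

open Finset Real

theorem sum_deriv_eq_zero_of_sum_eq_const {ι : Type*} [Fintype ι] {f : ℝ → ι → ℝ} {c θ₀ : ℝ}
    (hf : ∀ i, DifferentiableAt ℝ (fun θ => f θ i) θ₀) (hc : ∀ θ, ∑ i, f θ i = c) :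
    ∑ i, deriv (fun θ => f θ i) θ₀ = 0 := by
  rw [← deriv_fun_sum fun i _ => hf i]
  simp only [hc, deriv_const]

theorem HasDerivAt.mul_ratio_mul_log {f : ℝ → ℝ} {f' x : ℝ} (hf : HasDerivAt f f' x)
    (hfx : f x ≠ 0) {w : ℝ} (hw : w ≠ 0) (b : ℝ) :
    HasDerivAt (fun y => w * b * (f x / w) * Real.log (f y)) (b * f') x := by
  refine ((hf.log hfx).const_mul (w * b * (f x / w))).congr_deriv ?_
  field_simp

theorem HasDerivAt.mul_log_div_const {f : ℝ → ℝ} {f' x : ℝ} (hf : HasDerivAt f f' x)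
    (hfx : f x ≠ 0) {c : ℝ} (hc : c ≠ 0) :
    HasDerivAt (fun y => f y * Real.log (f y / c)) (f' * (Real.log (f x / c) + 1)) x := by
  refine (hf.fun_mul ((hf.div_const c).log (div_ne_zero hfx hc))).congr_deriv ?_
  field_simp

theorem pepg_surrogate_gradient_general
    {X : Type*} [Fintype X]
    (π_old : X → ℝ) (hold_pos : ∀ x, 0 < π_old x)
    (A : X → ℝ)
    (p : ℝ → X → ℝ)
    (hpos : ∀ θ x, 0 < p θ x)
    (hsum : ∀ θ, ∑ x, p θ x = 1)
    (hdiff : ∀ x, Differentiable ℝ (fun θ => p θ x))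
    (θ₀ : ℝ) :
    deriv (fun θ => ∑ x, π_old x * (A x - Real.log (p θ₀ x / π_old x))
        * (p θ₀ x / π_old x) * Real.log (p θ x)) θ₀
      = deriv (fun θ => (∑ x, A x * p θ x)
          - ∑ x, p θ x * Real.log (p θ x / π_old x)) θ₀ := by
  set d : X → ℝ := fun x => deriv (fun θ => p θ x) θ₀
  have hd : ∀ x, HasDerivAt (fun θ => p θ x) (d x) θ₀ := fun x => (hdiff x θ₀).hasDerivAt
  have hsum_d : ∑ x, d x = 0 := sum_deriv_eq_zero_of_sum_eq_const (fun x => hdiff x θ₀) hsum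
  have hL := HasDerivAt.fun_sum (u := univ) fun x _ =>
    (hd x).mul_ratio_mul_log (hpos θ₀ x).ne' (hold_pos x).ne' (A x - log (p θ₀ x / π_old x))
  have hR := (HasDerivAt.fun_sum (u := univ) fun x _ => (hd x).const_mul (A x)).fun_sub
    (HasDerivAt.fun_sum (u := univ) fun x _ =>
      (hd x).mul_log_div_const (hpos θ₀ x).ne' (hold_pos x).ne')
  rw [hL.deriv, hR.deriv]
  calc ∑ x, (A x - log (p θ₀ x / π_old x)) * d x
      = ∑ x, (A x * d x - d x * (log (p θ₀ x / π_old x) + 1)) + ∑ x, d x := by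
        rw [← sum_add_distrib]
        exact sum_congr rfl fun x _ => by ring
    _ = _ := by rw [hsum_d, add_zero, sum_sub_distrib]

/-- The stop-gradient PEPG surrogate has the same `θ`-gradient as the proximal objective:
at any `θ₀`,
`(d/dθ)[Σ_x π_old(x)·(A(x) − log(p(θ₀,x)/π_old(x)))·(p(θ₀,x)/π_old(x))·log p(θ,x)]|_{θ=θ₀}
  = (d/dθ)[Σ_x A(x)·p(θ,x) − Σ_x p(θ,x)·log(p(θ,x)/π_old(x))]|_{θ=θ₀}`. -/
theorem pepg_surrogate_gradient
    {X : Type*} [Fintype X]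
    (π_old : X → ℝ) (hold_pos : ∀ x, 0 < π_old x) (hold_sum : ∑ x, π_old x = 1)
    (A : X → ℝ)
    (p : ℝ → X → ℝ)
    (hpos : ∀ θ x, 0 < p θ x)
    (hsum : ∀ θ, ∑ x, p θ x = 1)
    (hdiff : ∀ x, Differentiable ℝ (fun θ => p θ x))
    (θ₀ : ℝ) :
    deriv (fun θ => ∑ x, π_old x * (A x - Real.log (p θ₀ x / π_old x))
        * (p θ₀ x / π_old x) * Real.log (p θ x)) θ₀
      = deriv (fun θ => (∑ x, A x * p θ x)
          - ∑ x, p θ x * Real.log (p θ x / π_old x)) θ₀ :=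
  pepg_surrogate_gradient_general π_old hold_pos A p hpos hsum hdiff θ₀
end
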